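/- Let q be a prime power, n coprime to q, θ a primitive n-th root of unity, s coprime to n, and t an integer with qt ≡ t (mod n). Then the map φ given by a(X) ↦ a(θ^t X^s) (mod X^n−1) is an algebra automorphism of F_q[X]/⟨X^n−1⟩ that preserves Hamming weight. -/

import Mathlib

/-!
As `b = θ^t` and `θ^n = 1`, we have `b^n = 1`, hence `(b X^s)^n = 1` in `F[X]/⟨X^n - 1⟩` and
`X ↦ b X^s` defines an algebra endomorphism. If `s s' ≡ 1 (mod n)` and `d = b⁻¹ = b^(n-1)`,
the substitution `X ↦ d^{s'} X^{s'}` is a two-sided inverse. On the representative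
`∑_{i<n} aᵢ Xⁱ` the map sends `aᵢ Xⁱ` to `bⁱ aᵢ X^{s i mod n}`; as `i ↦ s i mod n` permutes
`{0, …, n-1}` and `bⁱ ≠ 0`, nonzero coefficients are only moved and rescaled, never merged or
killed, so the number of them is unchanged.
-/

open Polynomial

/-- The Hamming weight of an element of `F[X]/⟨X^n − 1⟩`: the number of nonzero
coefficients of its unique representative of degree `< n`. -/
noncomputable def hammingWt {F : Type*} [Field F] {n : ℕ} (hn : n ≠ 0)
    (x : AdjoinRoot (X ^ n - 1 : F[X])) : ℕ :=
  ((AdjoinRoot.modByMonicHom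
    (by simpa using monic_X_pow_sub_C (1 : F) hn : (X ^ n - 1 : F[X]).Monic)) x).support.card

open Finset AdjoinRoot

section Reduction

variable {R : Type*} [CommRing R] {n : ℕ}

lemma monic_X_pow_sub_one (hn : n ≠ 0) : (X ^ n - 1 : R[X]).Monic := by
  simpa using monic_X_pow_sub_C (1 : R) hn

lemma degree_X_pow_sub_one [Nontrivial R] (hn : n ≠ 0) : (X ^ n - 1 : R[X]).degree = n := by
  simpa using degree_X_pow_sub_C (Nat.pos_of_ne_zero hn) (1 : R)

lemma X_pow_sub_one_dvd_X_pow_sub_X_pow_mod (m : ℕ) :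
    (X ^ n - 1 : R[X]) ∣ X ^ m - X ^ (m % n) := by
  have h := (sub_dvd_pow_sub_pow (X ^ n : R[X]) 1 (m / n)).mul_left (X ^ (m % n))
  rwa [one_pow, ← pow_mul, mul_sub_one, ← pow_add, Nat.mod_add_div] at h

lemma sum_monomial_modByMonic_X_pow_sub_one [Nontrivial R] (hn : n ≠ 0) {ι : Type*}
    (S : Finset ι) (e : ι → ℕ) (u : ι → R) :
    (∑ i ∈ S, monomial (e i) (u i)) %ₘ (X ^ n - 1) =
      ∑ i ∈ S, monomial (e i % n) (u i) := by
  have hmonic := monic_X_pow_sub_one (R := R) hn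
  rw [modByMonic_eq_of_dvd_sub hmonic, (modByMonic_eq_self_iff hmonic).2]
  · rw [degree_X_pow_sub_one hn]
    refine (degree_sum_le _ _).trans_lt ((Finset.sup_lt_iff (WithBot.bot_lt_coe n)).2 fun i _ => ?_)
    exact (degree_monomial_le _ _).trans_lt
      (WithBot.coe_lt_coe.2 (Nat.mod_lt _ (Nat.pos_of_ne_zero hn)))
  · rw [← sum_sub_distrib]
    refine dvd_sum fun i _ => ?_
    rw [← C_mul_X_pow_eq_monomial, ← C_mul_X_pow_eq_monomial, ← mul_sub]
    exact (X_pow_sub_one_dvd_X_pow_sub_X_pow_mod _).mul_left _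

end Reduction

lemma card_support_sum_monomial {R ι : Type*} [Semiring R] {S : Finset ι} {e : ι → ℕ}
    {u : ι → R} (he : Set.InjOn e S) (hu : ∀ i ∈ S, u i ≠ 0) :
    #(∑ i ∈ S, monomial (e i) (u i)).support = #S := by
  suffices (∑ i ∈ S, monomial (e i) (u i)).support = S.image e by
    rw [this, card_image_of_injOn he]
  ext k
  simp only [mem_support_iff, finsetSum_coeff, coeff_monomial, mem_image]
  constructor
  · intro h
    obtain ⟨i, hi, h⟩ := exists_ne_zero_of_sum_ne_zero h
    exact ⟨i, hi, (ite_ne_right_iff.mp h).1⟩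
  · rintro ⟨i, hi, rfl⟩
    rw [sum_eq_single_of_mem i hi fun j hj hji => if_neg fun h => hji (he hj hi h), if_pos rfl]
    exact hu i hi

lemma comp_C_mul_X_pow_eq_sum {R : Type*} [CommSemiring R] (a : R[X]) (c : R) (k : ℕ) :
    a.comp (C c * X ^ k) = ∑ i ∈ a.support, monomial (k * i) (c ^ i * a.coeff i) := by
  rw [comp_eq_sum_left, Polynomial.sum]
  refine sum_congr rfl fun i _ => ?_
  rw [mul_pow, ← C_pow, ← pow_mul, ← mul_assoc, ← C_mul, C_mul_X_pow_eq_monomial,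
    mul_comm (a.coeff i)]

lemma card_support_comp_C_mul_X_pow_modByMonic {R : Type*} [CommRing R] [IsDomain R] {n : ℕ}
    (hn : n ≠ 0) {a : R[X]} (ha : a.degree < n) {c : R} (hc : c ≠ 0) {k : ℕ}
    (hk : k.Coprime n) : #((a.comp (C c * X ^ k)) %ₘ (X ^ n - 1)).support = #a.support := by
  have hlt : ∀ i ∈ a.support, i < n := fun i hi =>
    WithBot.coe_lt_coe.1 ((le_degree_of_mem_supp i hi).trans_lt ha)
  rw [comp_C_mul_X_pow_eq_sum, sum_monomial_modByMonic_X_pow_sub_one hn]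
  refine card_support_sum_monomial (fun i hi j hj hij => ?_)
    fun i hi => mul_ne_zero (pow_ne_zero i hc) (mem_support_iff.1 hi)
  have h : i % n = j % n := Nat.ModEq.cancel_left_of_coprime hk.symm hij
  rwa [Nat.mod_eq_of_lt (hlt i hi), Nat.mod_eq_of_lt (hlt j hj)] at h

section MonomialSubst

variable {R : Type*} [CommRing R] {n : ℕ}

lemma root_X_pow_sub_one_pow : root (X ^ n - 1 : R[X]) ^ n = 1 := by
  have h := eval₂_root (X ^ n - 1 : R[X])
  rwa [eval₂_sub, eval₂_X_pow, eval₂_one, sub_eq_zero] at h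

noncomputable def monomialSubst (c : R) (k : ℕ) (hc : c ^ n = 1) :
    AdjoinRoot (X ^ n - 1 : R[X]) →ₐ[R] AdjoinRoot (X ^ n - 1 : R[X]) :=
  liftAlgHom _ (Algebra.ofId R _) (c • root _ ^ k) <| by
    rw [eval₂_sub, eval₂_X_pow, eval₂_one, _root_.smul_pow, ← pow_mul, mul_comm, pow_mul,
      root_X_pow_sub_one_pow, one_pow, hc, one_smul, sub_self]

variable {c : R} {k : ℕ}

lemma monomialSubst_root (hc : c ^ n = 1) : monomialSubst c k hc (root _) = c • root _ ^ k :=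
  liftAlgHom_root ..

lemma monomialSubst_mk (hc : c ^ n = 1) (a : R[X]) :
    monomialSubst c k hc (mk _ a) = mk _ (a.comp (C c * X ^ k)) := by
  rw [← aeval_eq, ← aeval_eq, aeval_comp, ← aeval_algHom_apply, monomialSubst_root, aeval_eq,
    map_mul, map_pow, mk_C, mk_X, Algebra.smul_def]
  rfl

lemma monomialSubst_comp_eq_id {c' : R} {k' : ℕ} (hc : c ^ n = 1) (hc' : c' ^ n = 1)
    (hcc' : c' * c ^ k' = 1) (hkk' : k * k' ≡ 1 [MOD n]) :
    (monomialSubst c k hc).comp (monomialSubst c' k' hc') = AlgHom.id R _ := by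
  ext
  rw [AlgHom.comp_apply, monomialSubst_root, map_smul, map_pow, monomialSubst_root,
    _root_.smul_pow, smul_smul, ← pow_mul, hcc', one_smul,
    pow_eq_pow_mod _ root_X_pow_sub_one_pow, hkk',
    ← pow_eq_pow_mod _ root_X_pow_sub_one_pow, pow_one, AlgHom.id_apply]

lemma monomialSubst_bijective (hn : n ≠ 0) (hc : c ^ n = 1) (hk : k.Coprime n) :
    Function.Bijective (monomialSubst c k hc) := by
  obtain ⟨k', hkk'⟩ : ∃ k', k * k' ≡ 1 [MOD n] :=
    ⟨k ^ (n.totient - 1), by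
      rw [← pow_succ', Nat.sub_add_cancel (Nat.totient_pos.2 (Nat.pos_of_ne_zero hn))]
      exact Nat.ModEq.pow_totient hk⟩
  set d := c ^ (n - 1)
  have hcd : c * d = 1 := by rw [mul_pow_sub_one hn, hc]
  have hd : d ^ n = 1 := by rw [← pow_mul, mul_comm, pow_mul, hc, one_pow]
  have hd' : (d ^ k') ^ n = 1 := by rw [← pow_mul, mul_comm, pow_mul, hd, one_pow]
  refine Function.bijective_iff_has_inverse.2
    ⟨monomialSubst (d ^ k') k' hd', fun x => ?_, fun x => ?_⟩
  · refine DFunLike.congr_fun (monomialSubst_comp_eq_id hd' hc ?_ ?_) x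
    · rw [← pow_mul, mul_comm k', pow_eq_pow_mod _ hd, hkk', ← pow_eq_pow_mod _ hd, pow_one,
        hcd]
    · rwa [mul_comm]
  · refine DFunLike.congr_fun (monomialSubst_comp_eq_id hc hd' ?_ hkk') x
    rw [← mul_pow, mul_comm, hcd, one_pow]

end MonomialSubst

lemma hammingWt_mk {F : Type*} [Field F] {n : ℕ} (hn : n ≠ 0) (a : F[X]) :
    hammingWt hn (mk _ a) = #(a %ₘ (X ^ n - 1)).support := by
  rw [hammingWt, modByMonicHom_mk]

lemma hammingWt_monomialSubst {F : Type*} [Field F] {n : ℕ} (hn : n ≠ 0) {c : F}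
    (hc : c ^ n = 1) {k : ℕ} (hk : k.Coprime n) (x : AdjoinRoot (X ^ n - 1 : F[X])) :
    hammingWt hn (monomialSubst c k hc x) = hammingWt hn x := by
  have hmonic := monic_X_pow_sub_one (R := F) hn
  obtain ⟨a, ha, rfl⟩ : ∃ a : F[X], a.degree < n ∧ mk _ a = x := by
    induction x using AdjoinRoot.induction_on with
    | ih p =>
      refine ⟨p %ₘ _, degree_X_pow_sub_one (R := F) hn ▸ degree_modByMonic_lt p hmonic, ?_⟩
      rw [← modByMonicHom_mk hmonic, mk_leftInverse hmonic]
  have hc0 : c ≠ 0 := fun h => by simp [h, zero_pow hn] at hc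
  rw [monomialSubst_mk, hammingWt_mk, hammingWt_mk,
    (modByMonic_eq_self_iff hmonic (p := a)).2 (degree_X_pow_sub_one (R := F) hn ▸ ha),
    card_support_comp_C_mul_X_pow_modByMonic hn ha hc0 hk]

theorem stmt1 (F : Type*) [Field F] (n : ℕ) (hn : 0 < n)
    (E : Type*) [Field E] [Algebra F E] (θ : E) (hθ : IsPrimitiveRoot θ n)
    (s t : ℕ) (hs : Nat.Coprime s n)
    (b : F) (hb : algebraMap F E b = θ ^ t) :
    ∃ φ : AdjoinRoot (X ^ n - 1 : F[X]) ≃ₐ[F] AdjoinRoot (X ^ n - 1 : F[X]),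
      (∀ a : F[X], φ (AdjoinRoot.mk _ a) = AdjoinRoot.mk _ (a.comp (C b * X ^ s))) ∧
      (∀ x, hammingWt hn.ne' (φ x) = hammingWt hn.ne' x) := by
  have hbn : b ^ n = 1 := (algebraMap F E).injective <| by
    rw [map_pow, hb, map_one, ← pow_mul, mul_comm, pow_mul, hθ.pow_eq_one, one_pow]
  exact ⟨AlgEquiv.ofBijective _ (monomialSubst_bijective hn.ne' hbn hs), monomialSubst_mk hbn,
    hammingWt_monomialSubst hn.ne' hbn hs⟩
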